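/- Let E be a vector lattice over ℝ, let Y be a real vector space, let n be a positive integer, and let T : E^n → Y be an n-linear map whose restriction to (E⁺)^n is total orderization invariant. Then T(f_1,...,f_n) = 0 whenever f_1,...,f_n ∈ E⁺ satisfy ⋀_{k=1}^n f_k = 0. -/
import Mathlib


open Finset

/-- `Mk x k` is `M_{k+1}(x_1,...,x_n)` (`k : Fin n` represents the 1-indexed index `k+1`):
the supremum over all subsets `I` of `{1,...,n}` of cardinality `n + 1 - (k+1) = n - k` of
the infima `⋀_{i ∈ I} x i`. -/
def Mk {L : Type*} [Lattice L] {n : ℕ} (x : Fin n → L) (k : Fin n) : L :=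
  ((univ : Finset (Fin n)).powersetCard (n - k.val)).attach.sup'
    (attach_nonempty_iff.mpr (powersetCard_nonempty.mpr (by simp)))
    fun I => I.1.inf' (card_pos.mp (by
      have h := (mem_powersetCard.mp I.2).2
      have hk := k.isLt
      omega)) x

lemma Mk_zero_eq {L : Type*} [Lattice L] {n : ℕ} (hn : 0 < n) (x : Fin n → L) :
    Mk x ⟨0, hn⟩ = univ.inf' ⟨⟨0, hn⟩, mem_univ _⟩ x := by
  unfold Mk
  have hpc : (univ : Finset (Fin n)).powersetCard (n - 0) = {univ} := by
    simpa using powersetCard_self (univ : Finset (Fin n))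
  apply le_antisymm
  · apply sup'_le
    intro I _
    have hI : I.1 = univ := by
      have h2 := (mem_powersetCard.mp I.2).2
      have h3 : (I.1).card = Fintype.card (Fin n) := by simpa using h2
      exact (Finset.card_eq_iff_eq_univ _).mp h3
    apply le_of_eq
    congr 1
  · have hmem : (univ : Finset (Fin n)) ∈ (univ : Finset (Fin n)).powersetCard (n - (⟨0, hn⟩ : Fin n).val) := mem_powersetCard.mpr ⟨subset_rfl, by simp⟩
    refine le_sup'_of_le _ (b := ⟨univ, hmem⟩) (mem_attach _ _) ?_
    exact le_rfl

/-- If `T : E^n → Y` is an `n`-linear map on a vector lattice `E` whose restriction to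
`(E⁺)^n` is total orderization invariant, then `T(f_1,...,f_n) = 0` whenever
`f_1,...,f_n ∈ E⁺` satisfy `⋀_{k=1}^n f_k = 0`. -/
theorem statement16 {E Y : Type*} [Lattice E] [AddCommGroup E] [Module ℝ E]
    [CovariantClass E E (· + ·) (· ≤ ·)] [PosSMulMono ℝ E]
    [AddCommGroup Y] [Module ℝ Y] {n : ℕ} (hn : 0 < n)
    (T : MultilinearMap ℝ (fun _ : Fin n => E) Y)
    (hT : ∀ x : Fin n → E, (∀ i, 0 ≤ x i) → T x = T (fun k => Mk x k))
    (f : Fin n → E) (hf : ∀ i, 0 ≤ f i)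
    (hinf : univ.inf' ⟨⟨0, hn⟩, mem_univ _⟩ f = 0) :
    T f = 0 := by
  rw [hT f hf]
  exact T.map_coord_zero ⟨0, hn⟩ (by rw [Mk_zero_eq hn f, hinf])
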